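/- Let G ⊆ M∖{0} be a finite set, I a fractional ideal of O, k ∈ I, and T^k = {h ∈ I : v_j(h) = ∞ for all j ∈ I∖{k}}. Let B_k ⊆ T^k∖{0} be a finite set such that for every nonzero u ∈ T^k there exist a G-product G^α and h ∈ B_k with v_k(u) = v_k(G^α·h), and let κ_k ∈ ℕ satisfy κ_k + m ∈ {v_k(u) : 0 ≠ u ∈ T^k} for every m ∈ ℕ. Then every f ∈ I with κ_k ≤ v_k(f) < ∞ admits a k-reduction modulo (B_k, G). -/

import Mathlib

/-!
Since `v_k(f) ≥ κ_k`, the value `v_k(f)` is attained by some nonzero `u ∈ T^k`, hence by some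
`G^α h` with `h ∈ B_k`. Subtracting the right multiple of `G^α h` kills the leading term of
`f_k`, and it leaves the other components of `f` untouched because `h_j = 0` for `j ≠ k`.
-/

noncomputable section
open PowerSeries

/-- Coefficient-wise definition of the continuous substitution homomorphism
`X_j ↦ x j` from multivariate power series to power series (each `x j` having
zero constant coefficient). -/
def psiFun {K : Type*} [CommRing K] {n : ℕ} (x : Fin n → PowerSeries K)
    (F : MvPowerSeries (Fin n) K) : PowerSeries K :=
  PowerSeries.mk fun m =>
    PowerSeries.coeff m (∑ e : Fin n → Fin (m + 1),
      MvPowerSeries.coeff (Finsupp.equivFunOnFinite.symm fun j => (e j : ℕ)) F •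
        ∏ j, x j ^ ((e j : ℕ)))

/-- The data of an `n`-space algebroid curve with `r` branches: for each branch a
vector of power series (the parameterization), all with zero constant coefficient,
such that the kernels of the associated substitution maps (the primes `P i`)
are pairwise distinct. -/
structure CurveData (K : Type*) [Field K] (r n : ℕ) where
  x : Fin n → Fin r → PowerSeries K
  const_coeff_zero : ∀ j i, PowerSeries.constantCoeff (x j i) = 0
  primes_distinct : ∀ i i' : Fin r, i ≠ i' →
    {F : MvPowerSeries (Fin n) K | psiFun (fun j => x j i) F = 0} ≠
      {F : MvPowerSeries (Fin n) K | psiFun (fun j => x j i') F = 0}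

variable {K : Type*} [Field K] {r n : ℕ}

/-- The substitution homomorphism `ψ` with values in the total quotient ring
`⊕ K((t_i))`. -/
def CurveData.psi (D : CurveData K r n) (F : MvPowerSeries (Fin n) K) :
    Fin r → LaurentSeries K :=
  fun i => (psiFun (fun j => D.x j i) F : LaurentSeries K)

/-- The local ring `O` of the curve, viewed inside `⊕ K((t_i))`. -/
def CurveData.O (D : CurveData K r n) : Set (Fin r → LaurentSeries K) :=
  Set.range D.psi

open Classical in
/-- The order valuation on Laurent series, with `v(0) = ∞`. -/
def lOrd {K : Type*} [Field K] (f : LaurentSeries K) : WithTop ℤ :=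
  if f = 0 then ⊤ else (f.order : WithTop ℤ)

/-- The value vector `v(h) = (v_1(h_1), …, v_r(h_r))`. -/
def vv {K : Type*} [Field K] {r : ℕ} (h : Fin r → LaurentSeries K) : Fin r → WithTop ℤ :=
  fun i => lOrd (h i)

/-- The semiring of values `Γ = v(O)`. -/
def CurveData.Gamma (D : CurveData K r n) : Set (Fin r → WithTop ℤ) := vv '' D.O

/-- The maximal ideal `M` of `O` (elements of `O` all of whose components have
positive order). -/
def CurveData.Mset (D : CurveData K r n) : Set (Fin r → LaurentSeries K) :=
  {g | g ∈ D.O ∧ ∀ i, 0 < lOrd (g i)}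

/-- `I` is a fractional ideal of `O`: a finitely generated `O`-submodule of
`⊕ K((t_i))` containing an element all of whose components are nonzero. -/
def CurveData.IsFracIdeal (D : CurveData K r n) (I : Set (Fin r → LaurentSeries K)) : Prop :=
  (∃ B : Finset (Fin r → LaurentSeries K),
    I = {f | ∃ a : (Fin r → LaurentSeries K) → (Fin r → LaurentSeries K),
      (∀ b ∈ B, a b ∈ D.O) ∧ f = ∑ b ∈ B, a b * b}) ∧
  ∃ h ∈ I, ∀ i, h i ≠ 0

/-- A `G`-product `G^α = ∏_{g ∈ G} g^{α_g}`. -/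
def Gprod {K : Type*} [Field K] {r : ℕ} (G : Finset (Fin r → LaurentSeries K))
    (α : (Fin r → LaurentSeries K) → ℕ) : Fin r → LaurentSeries K :=
  ∏ g ∈ G, g ^ α g

/-- `f'` is a `k`-reduction of `f` modulo `(H, G)`. -/
def IsKRed {K : Type*} [Field K] {r : ℕ} (G H : Finset (Fin r → LaurentSeries K)) (k : Fin r)
    (f f' : Fin r → LaurentSeries K) : Prop :=
  lOrd (f k) ≠ ⊤ ∧
  ∃ (c : K) (α : (Fin r → LaurentSeries K) → ℕ) (h : Fin r → LaurentSeries K),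
    h ∈ H ∧ f' = f - c • (Gprod G α * h) ∧
    (∀ i, lOrd (f i) ≤ lOrd (f' i)) ∧ lOrd (f k) < lOrd (f' k)

/-- `f'` is a reduction of `f` modulo `(H, G)`. -/
def IsRed {K : Type*} [Field K] {r : ℕ} (G H : Finset (Fin r → LaurentSeries K))
    (f f' : Fin r → LaurentSeries K) : Prop :=
  ∃ k, IsKRed G H k f f'

/-- `(H, G)` is a Standard Basis for the fractional ideal `I`. -/
def IsSB {K : Type*} [Field K] {r n : ℕ} (D : CurveData K r n)
    (G H : Finset (Fin r → LaurentSeries K)) (I : Set (Fin r → LaurentSeries K)) : Prop :=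
  ↑G ⊆ D.Mset \ {0} ∧ ↑H ⊆ I \ {0} ∧
  ∀ f ∈ I, f ≠ 0 → ∃ f', IsRed G H f f'

/-- `G` is a Standard Basis for the local ring `O`. -/
def IsSBO {K : Type*} [Field K] {r n : ℕ} (D : CurveData K r n)
    (G : Finset (Fin r → LaurentSeries K)) : Prop :=
  IsSB D G {1} D.O

/-- `f` is an `S_k`-process of the pair `(h₁, h₂)` of `H` over `G`. -/
def IsSProc {K : Type*} [Field K] {r : ℕ} (G H : Finset (Fin r → LaurentSeries K)) (k : Fin r)
    (c₁ c₂ : K) (α₁ α₂ : (Fin r → LaurentSeries K) → ℕ)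
    (h₁ h₂ f : Fin r → LaurentSeries K) : Prop :=
  h₁ ∈ H ∧ h₂ ∈ H ∧ f = c₁ • (Gprod G α₁ * h₁) + c₂ • (Gprod G α₂ * h₂) ∧
  min (lOrd ((Gprod G α₁ * h₁) k)) (lOrd ((Gprod G α₂ * h₂) k)) < lOrd (f k)

theorem HahnSeries.exists_orderTop_lt_orderTop_sub_smul {Γ F : Type*} [LinearOrder Γ] [Field F]
    {x y : HahnSeries Γ F} (hy : y ≠ 0) (h : x.orderTop = y.orderTop) :
    ∃ c : F, x.orderTop < (x - c • y).orderTop := by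
  obtain ⟨g, hg⟩ := WithTop.ne_top_iff_exists.1 (orderTop_ne_top.2 hy)
  have hyg : y.coeff g ≠ 0 := coeff_orderTop_ne hg.symm
  refine ⟨x.coeff g / y.coeff g, lt_of_le_of_ne ?_ ?_⟩
  · calc x.orderTop = min x.orderTop y.orderTop := by rw [h, min_self]
      _ ≤ min x.orderTop (_ • y).orderTop := min_le_min_left _ (orderTop_le_orderTop_smul _ _)
      _ ≤ _ := min_orderTop_le_orderTop_sub
  · rw [h, ← hg]
    refine (orderTop_ne_of_coeff_eq_zero ?_).symm
    rw [coeff_sub, coeff_smul, smul_eq_mul, div_mul_cancel₀ _ hyg, sub_self]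

theorem lOrd_eq_orderTop (f : LaurentSeries K) : lOrd f = f.orderTop := by
  unfold lOrd
  split_ifs with hf
  · simp [hf]
  · exact HahnSeries.order_eq_orderTop_of_ne_zero hf

theorem lOrd_eq_top_iff {f : LaurentSeries K} : lOrd f = ⊤ ↔ f = 0 := by
  rw [lOrd_eq_orderTop, HahnSeries.orderTop_eq_top]

theorem exists_nat_add_eq_of_le {v : WithTop ℤ} (κ : ℕ) (hκ : ((κ : ℤ) : WithTop ℤ) ≤ v)
    (hv : v ≠ ⊤) : ∃ m : ℕ, v = (((κ + m : ℕ) : ℤ) : WithTop ℤ) := by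
  lift v to ℤ using hv
  have hκv : (κ : ℤ) ≤ v := WithTop.coe_le_coe.1 hκ
  exact ⟨(v - κ).toNat, congrArg _ (by omega : v = ((κ + (v - κ).toNat : ℕ) : ℤ))⟩

theorem exists_isKRed_of_lOrd_eq {G B : Finset (Fin r → LaurentSeries K)} {k : Fin r}
    {f h : Fin r → LaurentSeries K} {α : (Fin r → LaurentSeries K) → ℕ}
    (hfk : lOrd (f k) ≠ ⊤) (hB : h ∈ B) (hh : ∀ j, j ≠ k → lOrd (h j) = ⊤)
    (hval : lOrd ((Gprod G α * h) k) = lOrd (f k)) :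
    ∃ f', IsKRed G B k f f' := by
  have hgk : (Gprod G α * h) k ≠ 0 := fun h0 => hfk (hval ▸ lOrd_eq_top_iff.2 h0)
  obtain ⟨c, hc⟩ := HahnSeries.exists_orderTop_lt_orderTop_sub_smul hgk
    (by simpa only [lOrd_eq_orderTop] using hval.symm)
  rw [← lOrd_eq_orderTop, ← lOrd_eq_orderTop] at hc
  refine ⟨f - c • (Gprod G α * h), hfk, c, α, h, hB, rfl, fun i => ?_, hc⟩
  obtain rfl | hik := eq_or_ne i k
  · exact hc.le
  · simp [lOrd_eq_top_iff.1 (hh i hik)]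

theorem statement14_general {K : Type*} [Field K] {r : ℕ}
    (G : Finset (Fin r → LaurentSeries K))
    (I : Set (Fin r → LaurentSeries K))
    (k : Fin r) (B : Finset (Fin r → LaurentSeries K))
    (hB : ↑B ⊆ {h | h ∈ I ∧ ∀ j, j ≠ k → lOrd (h j) = ⊤} \ {0})
    (hBgen : ∀ u ∈ I, (∀ j, j ≠ k → lOrd (u j) = ⊤) → u ≠ 0 →
      ∃ (α : (Fin r → LaurentSeries K) → ℕ), ∃ h ∈ B,
        lOrd (u k) = lOrd ((Gprod G α * h) k))
    (κ : ℕ)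
    (hκ : ∀ m : ℕ, ∃ u ∈ I, (∀ j, j ≠ k → lOrd (u j) = ⊤) ∧ u ≠ 0 ∧
      lOrd (u k) = (((κ + m : ℕ) : ℤ) : WithTop ℤ))
    (f : Fin r → LaurentSeries K)
    (hfk : ((κ : ℤ) : WithTop ℤ) ≤ lOrd (f k)) (hfk' : lOrd (f k) ≠ ⊤) :
    ∃ f', IsKRed G B k f f' := by
  obtain ⟨m, hm⟩ := exists_nat_add_eq_of_le κ hfk hfk'
  obtain ⟨u, huI, huk, hu0, hu⟩ := hκ m
  obtain ⟨α, h, hhB, hα⟩ := hBgen u huI huk hu0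
  exact exists_isKRed_of_lOrd_eq hfk' hhB (hB hhB).1.2 (by rw [← hα, hu, hm])

/-- Let `G ⊆ M \ {0}` be finite, `I` a fractional ideal of `O`,
`k ∈ I`, and `T^k = {h ∈ I : v_j(h) = ∞ for all j ≠ k}`. Let `B_k ⊆ T^k \ {0}`
be a finite set such that the value `v_k` of every nonzero `u ∈ T^k` is realized
by some `G^α h` with `h ∈ B_k`, and let `κ_k ∈ ℕ` be such that
`κ_k + ℕ ⊆ v_k(T^k \ {0})`. Then every `f ∈ I` with `κ_k ≤ v_k(f) < ∞` admits a
`k`-reduction modulo `(B_k, G)`. -/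
theorem statement14 {K : Type*} [Field K] [IsAlgClosed K] {r n : ℕ} (hr : 1 ≤ r)
    (D : CurveData K r n) (G : Finset (Fin r → LaurentSeries K))
    (hG : ↑G ⊆ D.Mset \ {0})
    (I : Set (Fin r → LaurentSeries K)) (hI : D.IsFracIdeal I)
    (k : Fin r) (B : Finset (Fin r → LaurentSeries K))
    (hB : ↑B ⊆ {h | h ∈ I ∧ ∀ j, j ≠ k → lOrd (h j) = ⊤} \ {0})
    (hBgen : ∀ u ∈ I, (∀ j, j ≠ k → lOrd (u j) = ⊤) → u ≠ 0 →
      ∃ (α : (Fin r → LaurentSeries K) → ℕ), ∃ h ∈ B,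
        lOrd (u k) = lOrd ((Gprod G α * h) k))
    (κ : ℕ)
    (hκ : ∀ m : ℕ, ∃ u ∈ I, (∀ j, j ≠ k → lOrd (u j) = ⊤) ∧ u ≠ 0 ∧
      lOrd (u k) = (((κ + m : ℕ) : ℤ) : WithTop ℤ))
    (f : Fin r → LaurentSeries K) (hf : f ∈ I)
    (hfk : ((κ : ℤ) : WithTop ℤ) ≤ lOrd (f k)) (hfk' : lOrd (f k) ≠ ⊤) :
    ∃ f', IsKRed G B k f f' :=
  statement14_general G I k B hB hBgen κ hκ f hfk hfk'
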